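/- Let p be a prime, m a positive integer, q = p^m, and let f : 𝔽_q → 𝔽_p be a p-ary function. Then f(ax) = f(x) for all a ∈ 𝔽_p^* and all x ∈ 𝔽_q if and only if W_f(aβ) = W_f(β) for all a ∈ 𝔽_p^* and all β ∈ 𝔽_q. -/

import Mathlib

open Finset

noncomputable def zeta (p : ℕ) (a : ZMod p) : ℂ :=
  Complex.exp (2 * Real.pi * Complex.I / p) ^ a.val
noncomputable def walsh (p : ℕ) {F : Type*} [Fintype F] [CommRing F] [Algebra (ZMod p) F]
    (f : F → ZMod p) (β : F) : ℂ :=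
  ∑ x : F, zeta p (f x - Algebra.trace (ZMod p) F (β * x))

section aux

variable (p : ℕ) [Fact p.Prime]

lemma zeta_pow_p : Complex.exp (2 * Real.pi * Complex.I / p) ^ p = 1 :=
  (Complex.isPrimitiveRoot_exp p (Nat.Prime.ne_zero Fact.out)).pow_eq_one

/-- `zeta` as an additive character. -/
noncomputable def psi : AddChar (ZMod p) ℂ := AddChar.zmodChar p (zeta_pow_p p)

lemma zeta_eq_psi (a : ZMod p) : zeta p a = psi p a := rfl

lemma psi_injective : Function.Injective (psi p) := by
  have hprim := Complex.isPrimitiveRoot_exp p (Nat.Prime.ne_zero Fact.out)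
  intro a b hab
  have := hprim.pow_inj (ZMod.val_lt a) (ZMod.val_lt b) hab
  exact ZMod.val_injective p this

variable {F : Type*} [Field F] [Fintype F] [Algebra (ZMod p) F]

/-- The additive character `β ↦ ψ(Tr(β d))` of `F`. -/
noncomputable def chi (d : F) : AddChar F ℂ :=
  (psi p).compAddMonoidHom
    ((Algebra.trace (ZMod p) F).toAddMonoidHom.comp (AddMonoidHom.mulRight d))

lemma chi_apply (d β : F) : chi p d β = psi p (Algebra.trace (ZMod p) F (β * d)) := rfl

open scoped Classical in
lemma sum_chi (d : F) :
    ∑ β : F, psi p (Algebra.trace (ZMod p) F (β * d)) =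
      if d = 0 then (Fintype.card F : ℂ) else 0 := by
  split_ifs with hd
  · subst hd; simp [map_zero]
  · have hnd : ∃ b : F, Algebra.trace (ZMod p) F (d * b) ≠ 0 := by
      have htr := (traceForm_nondegenerate (ZMod p) F).1 d
      simp_rw [Algebra.traceForm_apply] at htr
      by_contra! hf
      exact hd (htr hf)
    obtain ⟨b, hb⟩ := hnd
    have hchi : chi p d ≠ 0 := by
      intro h0
      apply hb
      have : chi p d b = 1 := by rw [h0]; rfl
      rw [chi_apply] at this
      have h2 : Algebra.trace (ZMod p) F (b * d) = (0 : ZMod p) :=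
        psi_injective p (this.trans (AddChar.map_zero_eq_one (psi p)).symm)
      rwa [mul_comm] at h2
    have := (AddChar.sum_eq_zero_iff_ne_zero (ψ := chi p d)).mpr hchi
    simpa [chi_apply] using this

lemma walsh_inversion (f : F → ZMod p) (x : F) :
    ∑ β : F, walsh p f β * psi p (Algebra.trace (ZMod p) F (β * x)) =
      (Fintype.card F : ℂ) * psi p (f x) := by
  unfold walsh
  simp_rw [Finset.sum_mul, zeta_eq_psi]
  rw [Finset.sum_comm]
  have key : ∀ y : F, ∀ β : F,
      psi p (f y - Algebra.trace (ZMod p) F (β * y)) *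
        psi p (Algebra.trace (ZMod p) F (β * x)) =
      psi p (f y) * psi p (Algebra.trace (ZMod p) F (β * (x - y))) := by
    intro y β
    rw [sub_eq_add_neg, AddChar.map_add_eq_mul, mul_assoc, ← AddChar.map_add_eq_mul]
    congr 2
    rw [mul_sub, map_sub]
    ring
  calc ∑ y : F, ∑ β : F,
        psi p (f y - Algebra.trace (ZMod p) F (β * y)) *
          psi p (Algebra.trace (ZMod p) F (β * x))
      = ∑ y : F, psi p (f y) *
          ∑ β : F, psi p (Algebra.trace (ZMod p) F (β * (x - y))) := by
        refine Finset.sum_congr rfl fun y _ => ?_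
        rw [Finset.mul_sum]
        exact Finset.sum_congr rfl fun β _ => key y β
    _ = (Fintype.card F : ℂ) * psi p (f x) := by
        classical
        simp_rw [sum_chi]
        rw [Finset.sum_eq_single x]
        · simp [mul_comm]
        · intro y _ hy
          rw [if_neg (fun h => hy (sub_eq_zero.mp h).symm), mul_zero]
        · intro h; exact absurd (Finset.mem_univ x) h

end aux

/-- Lemma 4.4, (i) ⇔ (ii). For a `p`-ary function `f : 𝔽_q → 𝔽_p`:
`f(ax) = f(x)` for all `a ∈ 𝔽_p^*`, `x ∈ 𝔽_q` if and only if `W_f(aβ) = W_f(β)` for all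
`a ∈ 𝔽_p^*`, `β ∈ 𝔽_q`. -/
theorem stmt_8 (p m : ℕ) [Fact p.Prime] (hm : 0 < m)
    (F : Type*) [Field F] [Fintype F] [Algebra (ZMod p) F]
    (hcard : Fintype.card F = p ^ m)
    (f : F → ZMod p) :
    (∀ (a : (ZMod p)ˣ) (x : F), f (algebraMap (ZMod p) F (a : ZMod p) * x) = f x) ↔
    (∀ (a : (ZMod p)ˣ) (β : F),
      walsh p f (algebraMap (ZMod p) F (a : ZMod p) * β) = walsh p f β) := by
  have hcne : ∀ a : (ZMod p)ˣ, algebraMap (ZMod p) F (a : ZMod p) ≠ 0 := fun a => by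
    simp [map_eq_zero_iff _ (algebraMap (ZMod p) F).injective, a.ne_zero]
  constructor
  · intro h a β
    set c := algebraMap (ZMod p) F (a : ZMod p) with hc
    unfold walsh
    refine Fintype.sum_equiv (Equiv.mulLeft₀ c (hcne a)) _ _ fun x => ?_
    simp only [Equiv.mulLeft₀_apply]
    rw [h a x]
    congr 2
    ring
  · intro h a x
    set c := algebraMap (ZMod p) F (a : ZMod p) with hc
    have hinvmap : algebraMap (ZMod p) F ((a⁻¹ : (ZMod p)ˣ) : ZMod p) = c⁻¹ := by
      rw [hc, ← map_inv₀]
      congr 1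
      exact (Units.val_inv_eq_inv_val a)
    have key : (Fintype.card F : ℂ) * psi p (f (c * x)) =
        (Fintype.card F : ℂ) * psi p (f x) := by
      rw [← walsh_inversion, ← walsh_inversion]
      refine Fintype.sum_equiv (Equiv.mulLeft₀ c (hcne a)) _ _ fun β => ?_
      simp only [Equiv.mulLeft₀_apply]
      have h1 : walsh p f (c * β) = walsh p f β := h a β
      rw [h1]
      congr 2
      ring
    have hcardne : (Fintype.card F : ℂ) ≠ 0 := Nat.cast_ne_zero.mpr Fintype.card_ne_zero
    exact psi_injective p (mul_left_cancel₀ hcardne key)
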